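/- If Q is an attractor block for an IFS F on a compact metric space (i.e., F(closure Q) ⊆ interior Q), then the sets F^k(closure Q) form a decreasing sequence, the limit lim_{k→∞} F^k(closure Q) exists in the Hausdorff metric, equals ∩_{k≥0} F^k(closure Q), and is a Conley attractor of F. -/

import Mathlib

open Set Filter Metric Topology

/-- The set map of an IFS: `F(S) = ⋃ i, fᵢ(S)`. -/
def IFSApply {ι X : Type*} (f : ι → X → X) (S : Set X) : Set X := ⋃ i, f i '' S

/-- `lim_{k→∞} F^k(closure U) = A` in the Hausdorff (extended) metric. -/
def ConleyLim {ι X : Type*} [MetricSpace X] (f : ι → X → X) (U A : Set X) : Prop :=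
  Filter.Tendsto (fun k => EMetric.hausdorffEdist ((IFSApply f)^[k] (closure U)) A)
    Filter.atTop (nhds 0)

/-- A compact set `A` is a Conley attractor of the IFS `f` if there is an open `U ⊇ A`
with `A = lim_{k→∞} F^k(closure U)`. -/
def IsConleyAttractor {ι X : Type*} [MetricSpace X] (f : ι → X → X) (A : Set X) : Prop :=
  IsCompact A ∧ ∃ U : Set X, IsOpen U ∧ A ⊆ U ∧ ConleyLim f U A

/-- The basin of a Conley attractor: the union of all open sets `U` as in the definition. -/
def conleyBasin {ι X : Type*} [MetricSpace X] (f : ι → X → X) (A : Set X) : Set X :=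
  ⋃₀ {U : Set X | IsOpen U ∧ A ⊆ U ∧ ConleyLim f U A}

/-- `lim_{k→∞} F^k(S) = A` in the Hausdorff (extended) metric. -/
def IFSLim {ι X : Type*} [MetricSpace X] (f : ι → X → X) (S A : Set X) : Prop :=
  Filter.Tendsto (fun k => EMetric.hausdorffEdist ((IFSApply f)^[k] S) A)
    Filter.atTop (nhds 0)

/-- `A` is a strict attractor of the IFS `f`. -/
def IsStrictAttractor {ι X : Type*} [MetricSpace X] (f : ι → X → X) (A : Set X) : Prop :=
  A.Nonempty ∧ IsCompact A ∧ IFSApply f A = A ∧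
  ∃ U : Set X, IsOpen U ∧ A ⊆ U ∧
    ∀ S : Set X, S.Nonempty → IsCompact S → S ⊆ U → IFSLim f S A

/-- The basin of a strict attractor: the largest open `U` with
`lim_{k→∞} F^k(S) = A` for all nonempty compact `S ⊆ U`. -/
def strictBasin {ι X : Type*} [MetricSpace X] (f : ι → X → X) (A : Set X) : Set X :=
  ⋃₀ {U : Set X | IsOpen U ∧
    ∀ S : Set X, S.Nonempty → IsCompact S → S ⊆ U → IFSLim f S A}

/-!
The iterates `Fᵏ(closure Q)` are compact and decrease, since `F(closure Q) ⊆ closure Q`.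
A decreasing sequence of compact sets eventually enters every neighbourhood of its
intersection `A`, so it converges to `A` in the Hausdorff metric, and so does every
sequence squeezed between `A` and it. The sets `Fᵏ(closure (interior Q))` are squeezed in
this way because `F(closure Q) ⊆ interior Q`; hence `A` is a Conley attractor with
`U = interior Q`.
-/

section HausdorffSqueeze

variable {X : Type*} [EMetricSpace X]

theorem hausdorffEDist_le_of_subset_of_infEDist_le {A B : Set X} {r : ENNReal} (hAB : A ⊆ B)
    (hB : ∀ x ∈ B, infEDist x A ≤ r) : hausdorffEDist B A ≤ r :=
  hausdorffEDist_le_of_infEDist hB fun x hx => by simp [infEDist_zero_of_mem (hAB hx)]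

theorem Antitone.eventually_subset_of_iInter_subset {K : ℕ → Set X} (hK : Antitone K)
    (hKc : ∀ n, IsCompact (K n)) {U : Set X} (hU : IsOpen U) (hKU : ⋂ n, K n ⊆ U) :
    ∀ᶠ n in atTop, K n ⊆ U := by
  obtain ⟨N, hN⟩ := exists_subset_nhds_of_isCompact hK.directed_ge hKc
    fun x hx => hU.mem_nhds (hKU hx)
  exact eventually_atTop.2 ⟨N, fun n hn => (hK hn).trans hN⟩

theorem Antitone.tendsto_hausdorffEDist_iInter_of_squeeze {K B : ℕ → Set X} (hK : Antitone K)
    (hKc : ∀ n, IsCompact (K n)) (hBK : ∀ n, B n ⊆ K n) (hB : ∀ n, ⋂ k, K k ⊆ B n) :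
    Tendsto (fun n => hausdorffEDist (B n) (⋂ k, K k)) atTop (𝓝 0) := by
  rw [ENNReal.tendsto_nhds_zero]
  intro ε hε
  have hnear : ∀ᶠ n in atTop, K n ⊆ {x | infEDist x (⋂ k, K k) < ε} :=
    hK.eventually_subset_of_iInter_subset hKc (isOpen_lt continuous_infEDist continuous_const)
      fun x hx => by simpa [infEDist_zero_of_mem hx] using hε
  filter_upwards [hnear] with n hn
  exact hausdorffEDist_le_of_subset_of_infEDist_le (hB n) fun x hx => (hn (hBK n hx)).le

end HausdorffSqueeze

section IFS

variable {ι X : Type*} (f : ι → X → X)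

theorem IFSApply_mono : Monotone (IFSApply f) :=
  fun _ _ hST => iUnion_mono fun _ => image_mono hST

theorem IFSApply_iterate_succ_subset {S : Set X} (hS : IFSApply f S ⊆ S) (k : ℕ) :
    (IFSApply f)^[k + 1] S ⊆ (IFSApply f)^[k] S :=
  (IFSApply_mono f).iterate k hS

theorem antitone_IFSApply_iterate {S : Set X} (hS : IFSApply f S ⊆ S) :
    Antitone fun k => (IFSApply f)^[k] S :=
  antitone_nat_of_succ_le (IFSApply_iterate_succ_subset f hS)

end IFS

section Compactness

variable {ι X : Type*} [TopologicalSpace X] [Finite ι] {f : ι → X → X}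

theorem isCompact_IFSApply (hf : ∀ i, Continuous (f i)) {S : Set X}
    (hS : IsCompact S) : IsCompact (IFSApply f S) :=
  isCompact_iUnion fun i => hS.image (hf i)

theorem isCompact_IFSApply_iterate (hf : ∀ i, Continuous (f i)) {S : Set X}
    (hS : IsCompact S) (k : ℕ) : IsCompact ((IFSApply f)^[k] S) := by
  induction k with
  | zero => exact hS
  | succ k ih =>
    rw [Function.iterate_succ_apply']
    exact isCompact_IFSApply hf ih

end Compactness

theorem attractor_block_gives_conley_attractor_general {ι X : Type*} [MetricSpace X] [CompactSpace X]
    [Fintype ι] (f : ι → X → X) (hf : ∀ i, Continuous (f i))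
    (Q : Set X) (hQ : IFSApply f (closure Q) ⊆ interior Q) :
    (∀ k : ℕ, (IFSApply f)^[k + 1] (closure Q) ⊆ (IFSApply f)^[k] (closure Q)) ∧
    Filter.Tendsto
      (fun k => EMetric.hausdorffEdist ((IFSApply f)^[k] (closure Q))
        (⋂ k : ℕ, (IFSApply f)^[k] (closure Q)))
      Filter.atTop (nhds 0) ∧
    IsConleyAttractor f (⋂ k : ℕ, (IFSApply f)^[k] (closure Q)) := by
  set K : ℕ → Set X := fun k => (IFSApply f)^[k] (closure Q)
  have hFQ : IFSApply f (closure Q) ⊆ closure Q := hQ.trans interior_subset_closure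
  have hK : Antitone K := antitone_IFSApply_iterate f hFQ
  have hKc : ∀ k, IsCompact (K k) := isCompact_IFSApply_iterate hf isClosed_closure.isCompact
  have hAK : ∀ k, ⋂ n, K n ⊆ K k := iInter_subset K
  have hA_int : ⋂ n, K n ⊆ interior Q := hAK 1 |>.trans hQ
  have hB : ∀ k, ⋂ n, K n ⊆ (IFSApply f)^[k] (closure (interior Q)) := fun k =>
    (hAK (k + 1)).trans <| (IFSApply_mono f).iterate k (hQ.trans subset_closure)
  have hBK : ∀ k, (IFSApply f)^[k] (closure (interior Q)) ⊆ K k := fun k =>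
    (IFSApply_mono f).iterate k (closure_mono interior_subset)
  refine ⟨IFSApply_iterate_succ_subset f hFQ,
    hK.tendsto_hausdorffEDist_iInter_of_squeeze hKc (fun _ => subset_rfl) hAK,
    (isClosed_iInter fun k => (hKc k).isClosed).isCompact, interior Q, isOpen_interior, hA_int,
    hK.tendsto_hausdorffEDist_iInter_of_squeeze hKc hBK hB⟩

theorem attractor_block_gives_conley_attractor {ι X : Type*} [MetricSpace X] [CompactSpace X]
    [Fintype ι] [Nonempty ι] (f : ι → X → X) (hf : ∀ i, Continuous (f i))
    (Q : Set X) (hQ : IFSApply f (closure Q) ⊆ interior Q) :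
    (∀ k : ℕ, (IFSApply f)^[k + 1] (closure Q) ⊆ (IFSApply f)^[k] (closure Q)) ∧
    Filter.Tendsto
      (fun k => EMetric.hausdorffEdist ((IFSApply f)^[k] (closure Q))
        (⋂ k : ℕ, (IFSApply f)^[k] (closure Q)))
      Filter.atTop (nhds 0) ∧
    IsConleyAttractor f (⋂ k : ℕ, (IFSApply f)^[k] (closure Q)) :=
  attractor_block_gives_conley_attractor_general f hf Q hQ
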